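/- arXiv:1303.2979 — 4 statements merged into one kernel-verified Lean document; each statement's English description precedes it below -/
import Mathlib

section
/- For every integer n ≥ 1, every z > 0 and every t ∈ ℝ, one has J_0(z) + 2 ∑_{k=1}^∞ e^{-iπkn/2} J_{kn}(z) cos(k t) = (1/n) ∑_{ℓ=0}^{n-1} e^{-i z cos((t + 2πℓ)/n)}, where the series on the left converges absolutely. -/
/-! With `c = -iz/2`, the generating function `e^{-iz cos θ} = e^{c e^{iθ}} e^{c e^{-iθ}}` is a double
power series in `e^{iθ}` and `e^{-iθ}`; grouping its terms by the difference `m = p - q` of the two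
exponents gives the Jacobi–Anger expansion `e^{-iz cos θ} = ∑_{m ∈ ℤ} (-i)^{|m|} J_{|m|}(z) e^{imθ}`.
Averaging it over the `n` points `θ_l = (t + 2πl)/n` keeps exactly the terms with `n ∣ m`, and
pairing `k` with `-k` in the surviving series `∑_{k ∈ ℤ} (-i)^{n|k|} J_{n|k|}(z) e^{ikt}` gives the
cosine series. Its absolute convergence comes for free, since summability in `ℂ` is absolute. -/

open scoped Real

/-- Bessel function of the first kind `J_ν(z)`, defined by its series. -/
noncomputable def besselJ (ν z : ℝ) : ℝ :=
  ∑' j : ℕ, ((-1 : ℝ) ^ j / (j.factorial * Real.Gamma ((j : ℝ) + ν + 1))) *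
    (z / 2) ^ (2 * (j : ℝ) + ν)

open Complex Finset Nat

lemma besselJ_natCast (m : ℕ) (z : ℝ) :
    besselJ m z = ∑' j : ℕ, (-1) ^ j / (j ! * (j + m)!) * (z / 2) ^ (2 * j + m) := by
  refine tsum_congr fun j => ?_
  rw [show (j : ℝ) + m + 1 = (j + m : ℕ) + 1 by push_cast; ring, Real.Gamma_nat_eq_factorial,
    show 2 * (j : ℝ) + m = (2 * j + m : ℕ) by push_cast; ring, Real.rpow_natCast]

lemma hasSum_besselJ_natCast (m : ℕ) (z : ℝ) :
    HasSum (fun j : ℕ => (-1) ^ j / (j ! * (j + m)!) * (z / 2) ^ (2 * j + m)) (besselJ m z) := by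
  rw [besselJ_natCast]
  refine Summable.hasSum (.of_norm_bounded
    ((Real.summable_pow_div_factorial ((z / 2) ^ 2)).mul_left (|z / 2| ^ m)) fun j => ?_)
  have hfac : (j ! : ℝ) ≤ j ! * (j + m)! := le_mul_of_one_le_right (by positivity)
    (mod_cast (j + m).factorial_pos)
  rw [Real.norm_eq_abs, abs_mul, abs_div, abs_pow, abs_neg, abs_one, one_pow, abs_pow,
    abs_of_pos (by positivity : (0 : ℝ) < j ! * (j + m)!), pow_add, pow_mul, ← abs_pow,
    abs_of_nonneg (sq_nonneg (z / 2))]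
  calc 1 / (j ! * (j + m)! : ℝ) * (((z / 2) ^ 2) ^ j * |z / 2| ^ m)
      ≤ 1 / (j ! : ℝ) * (((z / 2) ^ 2) ^ j * |z / 2| ^ m) := by gcongr
    _ = |z / 2| ^ m * (((z / 2) ^ 2) ^ j / j !) := by ring

lemma hasSum_neg_I_mul_pow_besselJ (m : ℕ) (z : ℝ) :
    HasSum (fun j : ℕ => (-I * z / 2) ^ (2 * j + m) / (j ! * (j + m)!))
      ((-I) ^ m * besselJ m z) := by
  refine ((hasSum_ofReal.mpr (hasSum_besselJ_natCast m z)).mul_left ((-I) ^ m)).congr_fun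
    fun j => ?_
  rw [show -I * z / 2 = -I * (z / 2 : ℂ) by ring, mul_pow, pow_add, pow_mul, neg_sq, I_sq]
  push_cast
  ring

lemma hasSum_exp_mul_exp (a b : ℂ) :
    HasSum (fun pq : ℕ × ℕ => a ^ pq.1 / pq.1 ! * (b ^ pq.2 / pq.2 !)) (exp a * exp b) := by
  rw [exp_eq_exp_ℂ]
  exact HasSum.mul (f := fun n => a ^ n / (n ! : ℂ)) (g := fun n => b ^ n / (n ! : ℂ))
    (NormedSpace.expSeries_div_hasSum_exp a) (NormedSpace.expSeries_div_hasSum_exp b)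
    (summable_mul_of_summable_norm (f := fun n => a ^ n / (n ! : ℂ))
      (g := fun n => b ^ n / (n ! : ℂ)) (NormedSpace.norm_expSeries_div_summable a)
      (NormedSpace.norm_expSeries_div_summable b))

lemma hasSum_exp_neg_mul_cos_mul_I (z θ : ℝ) :
    HasSum (fun pq : ℕ × ℕ => (-I * z / 2) ^ (pq.1 + pq.2) / (pq.1 ! * pq.2 !) *
      exp (((pq.1 : ℤ) - pq.2 : ℤ) * θ * I)) (exp (-((z * Real.cos θ : ℝ) : ℂ) * I)) := by
  have hcos : -((z * Real.cos θ : ℝ) : ℂ) * I =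
      -I * z / 2 * exp (θ * I) + -I * z / 2 * exp (-θ * I) := by
    rw [ofReal_mul, ofReal_cos, cos]
    ring_nf
  rw [hcos, exp_add]
  refine (hasSum_exp_mul_exp (-I * z / 2 * exp (θ * I)) (-I * z / 2 * exp (-θ * I))).congr_fun
    fun pq => ?_
  have harg : (((pq.1 : ℤ) - pq.2 : ℤ) : ℂ) * θ * I = pq.1 * (θ * I) + pq.2 * (-θ * I) := by
    push_cast
    ring
  rw [harg, exp_add, exp_nat_mul, exp_nat_mul]
  ring

def intProdNatEquiv : ℤ × ℕ ≃ ℕ × ℕ where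
  toFun mj := (mj.2 + mj.1.toNat, mj.2 + (-mj.1).toNat)
  invFun pq := ((pq.1 : ℤ) - pq.2, min pq.1 pq.2)
  left_inv mj := by ext <;> simp; omega
  right_inv pq := by ext <;> simp <;> omega

lemma intProdNatEquiv_sub (m : ℤ) (j : ℕ) :
    ((intProdNatEquiv (m, j)).1 : ℤ) - (intProdNatEquiv (m, j)).2 = m := by
  simp [intProdNatEquiv]

lemma intProdNatEquiv_add (m : ℤ) (j : ℕ) :
    (intProdNatEquiv (m, j)).1 + (intProdNatEquiv (m, j)).2 = 2 * j + m.natAbs := by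
  simp [intProdNatEquiv]
  omega

lemma intProdNatEquiv_factorial_mul (m : ℤ) (j : ℕ) :
    (intProdNatEquiv (m, j)).1 ! * (intProdNatEquiv (m, j)).2 ! = j ! * (j + m.natAbs)! := by
  rcases m with m | m <;> simp [intProdNatEquiv, mul_comm]

/-- `(-i)^{|m|} J_{|m|}` is the usual coefficient `(-i)^m J_m`, as `J_{-m} = (-1)^m J_m`;
writing it with `|m|` keeps the orders nonnegative. -/
theorem hasSum_jacobiAnger (z θ : ℝ) :
    HasSum (fun m : ℤ => (-I) ^ m.natAbs * besselJ m.natAbs z * exp (m * θ * I))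
      (exp (-((z * Real.cos θ : ℝ) : ℂ) * I)) := by
  refine (intProdNatEquiv.hasSum_iff.mpr (hasSum_exp_neg_mul_cos_mul_I z θ)).prod_fiberwise
    fun m => ?_
  refine ((hasSum_neg_I_mul_pow_besselJ m.natAbs z).mul_right (exp (m * θ * I))).congr_fun
    fun j => ?_
  simp only [Function.comp_apply, intProdNatEquiv_sub, intProdNatEquiv_add, ← Nat.cast_mul,
    intProdNatEquiv_factorial_mul]

lemma IsPrimitiveRoot.geom_sum_zpow {K : Type*} [Field K] {ζ : K} {n : ℕ}
    (hζ : IsPrimitiveRoot ζ n) (m : ℤ) :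
    ∑ l ∈ range n, (ζ ^ m) ^ l = if (n : ℤ) ∣ m then (n : K) else 0 := by
  split_ifs with h
  · simp [(hζ.zpow_eq_one_iff_dvd m).mpr h]
  · rw [geom_sum_eq (mt (hζ.zpow_eq_one_iff_dvd m).mp h), ← zpow_natCast, ← zpow_mul, mul_comm,
      zpow_mul, zpow_natCast, hζ.pow_eq_one, one_zpow, sub_self, zero_div]

lemma sum_range_exp_int_mul_I {n : ℕ} (hn : n ≠ 0) (t : ℝ) (m : ℤ) :
    ∑ l ∈ range n, exp (m * ((t + 2 * π * l) / n : ℝ) * I) =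
      if (n : ℤ) ∣ m then n * exp (m * (t / n : ℝ) * I) else 0 := by
  have hterm (l : ℕ) : exp (m * ((t + 2 * π * l) / n : ℝ) * I) =
      exp (m * (t / n : ℝ) * I) * (exp (2 * π * I / n) ^ m) ^ l := by
    rw [← exp_int_mul, ← exp_nat_mul, ← exp_add]
    congr 1
    push_cast
    ring
  simp_rw [hterm, ← mul_sum, (isPrimitiveRoot_exp n hn).geom_sum_zpow m]
  split_ifs <;> ring

lemma Int.hasSum_ite_dvd_iff {α : Type*} [AddCommMonoid α] [TopologicalSpace α] {n : ℤ}
    (hn : n ≠ 0) (f : ℤ → α) (a : α) :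
    HasSum (fun m => if n ∣ m then f m else 0) a ↔ HasSum (fun k => f (n * k)) a := by
  rw [← (mul_right_injective₀ hn).hasSum_iff]
  · simp [Function.comp_def]
  · rintro m hm
    rw [if_neg]
    rintro ⟨k, rfl⟩
    exact hm ⟨k, rfl⟩

theorem hasSum_average_exp_neg_mul_cos {n : ℕ} (hn : n ≠ 0) (z t : ℝ) :
    HasSum (fun k : ℤ => (-I) ^ (n * k.natAbs) * besselJ (n * k.natAbs : ℕ) z * exp (k * t * I))
      (1 / n * ∑ l ∈ range n, exp (-((z * Real.cos ((t + 2 * π * l) / n) : ℝ) : ℂ) * I)) := by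
  have hn' : (n : ℂ) ≠ 0 := Nat.cast_ne_zero.mpr hn
  have h := (hasSum_sum (s := range n) fun l _ =>
    hasSum_jacobiAnger z ((t + 2 * π * l) / n)).mul_left (1 / (n : ℂ))
  simp_rw [← mul_sum, sum_range_exp_int_mul_I hn] at h
  have hmul := (Int.hasSum_ite_dvd_iff (Nat.cast_ne_zero.mpr hn)
    (fun m => (-I) ^ m.natAbs * besselJ m.natAbs z * exp (m * (t / n : ℝ) * I)) _).mp
    (h.congr_fun fun m => by
      split_ifs
      · field_simp
      · simp)
  refine hmul.congr_fun fun k => ?_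
  simp only [Int.natAbs_mul, Int.natAbs_natCast]
  congr 2
  push_cast
  field_simp

lemma hasSum_cos_of_hasSum_int (b : ℕ → ℂ) (t : ℝ) {S : ℂ}
    (h : HasSum (fun k : ℤ => b k.natAbs * exp (k * t * I)) S) :
    HasSum (fun k : ℕ => b (k + 1) * Real.cos ((k + 1) * t)) ((S - b 0) / 2) := by
  have h2 := (hasSum_nat_add_iff' 1).mpr h.nat_add_neg
  simp only [Int.natAbs_neg, Int.natAbs_natCast, Int.natAbs_zero, Int.cast_zero, zero_mul,
    exp_zero, mul_one, sum_range_one, Int.cast_natCast, neg_zero, CharP.cast_eq_zero,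
    add_sub_add_right_eq_sub] at h2
  refine (h2.div_const 2).congr_fun fun k => ?_
  rw [ofReal_cos, cos]
  push_cast
  ring_nf

lemma exp_neg_pi_mul_div_two_mul_I (x : ℕ) : exp (-(π * x / 2) * I) = (-I) ^ x := by
  rw [show -(π * x / 2) * I = x * (-π / 2 * I) by ring, exp_nat_mul, exp_neg_pi_div_two_mul_I]

theorem closed_formula_dimension_two_series_general (n : ℕ) (hn : 1 ≤ n) (z : ℝ) (t : ℝ) :
    Summable (fun k : ℕ =>
      ‖Complex.exp (-(Real.pi * ((k : ℝ) + 1) * (n : ℝ) / 2) * Complex.I) *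
        ((besselJ (((k : ℝ) + 1) * (n : ℝ)) z : ℝ) : ℂ) *
        ((Real.cos (((k : ℝ) + 1) * t) : ℝ) : ℂ)‖) ∧
    ((besselJ 0 z : ℝ) : ℂ) +
      2 * ∑' k : ℕ, Complex.exp (-(Real.pi * ((k : ℝ) + 1) * (n : ℝ) / 2) * Complex.I) *
        ((besselJ (((k : ℝ) + 1) * (n : ℝ)) z : ℝ) : ℂ) *
        ((Real.cos (((k : ℝ) + 1) * t) : ℝ) : ℂ) =
      (1 / (n : ℂ)) * ∑ l ∈ Finset.range n,
        Complex.exp (-((z * Real.cos ((t + 2 * Real.pi * (l : ℝ)) / (n : ℝ)) : ℝ) : ℂ) * Complex.I) := by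
  have hcos := hasSum_cos_of_hasSum_int (fun k => (-I) ^ (n * k) * besselJ (n * k : ℕ) z) t
    (hasSum_average_exp_neg_mul_cos (by omega) z t)
  have hterm (k : ℕ) : exp (-(π * ((k : ℝ) + 1) * (n : ℝ) / 2) * I) *
      besselJ (((k : ℝ) + 1) * n) z = (-I) ^ (n * (k + 1)) * besselJ (n * (k + 1) : ℕ) z := by
    rw [← exp_neg_pi_mul_div_two_mul_I]
    push_cast
    ring_nf
  simp_rw [hterm]
  refine ⟨summable_norm_iff.mpr hcos.summable, ?_⟩
  rw [hcos.tsum_eq]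
  simp
  ring

/-- Closed formula for the series `J_0(z) + 2 ∑_{k≥1} e^{-iπkn/2} J_{kn}(z) cos(kt)`,
together with its absolute convergence. -/
theorem closed_formula_dimension_two_series (n : ℕ) (hn : 1 ≤ n) (z : ℝ) (hz : 0 < z) (t : ℝ) :
    Summable (fun k : ℕ =>
      ‖Complex.exp (-(Real.pi * ((k : ℝ) + 1) * (n : ℝ) / 2) * Complex.I) *
        ((besselJ (((k : ℝ) + 1) * (n : ℝ)) z : ℝ) : ℂ) *
        ((Real.cos (((k : ℝ) + 1) * t) : ℝ) : ℂ)‖) ∧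
    ((besselJ 0 z : ℝ) : ℂ) +
      2 * ∑' k : ℕ, Complex.exp (-(Real.pi * ((k : ℝ) + 1) * (n : ℝ) / 2) * Complex.I) *
        ((besselJ (((k : ℝ) + 1) * (n : ℝ)) z : ℝ) : ℂ) *
        ((Real.cos (((k : ℝ) + 1) * t) : ℝ) : ℂ) =
      (1 / (n : ℂ)) * ∑ l ∈ Finset.range n,
        Complex.exp (-((z * Real.cos ((t + 2 * Real.pi * (l : ℝ)) / (n : ℝ)) : ℝ) : ℂ) * Complex.I) :=
  closed_formula_dimension_two_series_general n hn z t
end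

section
/- Let m ≥ 1 be an integer, a > 0, and let f : ℝ^m → ℂ be a smooth function. Then for every x ∈ ℝ^m with x ≠ 0, |x|^{2-a} Δ(|x|^a f)(x) − |x|^a (|x|^{2-a} Δf(x)) = 2a (𝔼f(x) + ((a+m-2)/2) f(x)), i.e. the commutator of the operators |x|^{2-a}Δ and multiplication by |x|^a equals 2a(𝔼 + (a+m-2)/2). -/
/-- Partial derivative `∂_{x_i} f(x)` of a function on Euclidean space. -/
noncomputable def partialDeriv {m : ℕ} (f : EuclideanSpace ℝ (Fin m) → ℂ) (i : Fin m)
    (x : EuclideanSpace ℝ (Fin m)) : ℂ :=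
  fderiv ℝ f x (EuclideanSpace.single i 1)

/-- The Laplace operator `Δf(x) = ∑_i ∂_{x_i}² f(x)`. -/
noncomputable def laplacianOp {m : ℕ} (f : EuclideanSpace ℝ (Fin m) → ℂ)
    (x : EuclideanSpace ℝ (Fin m)) : ℂ :=
  ∑ i, partialDeriv (fun y => partialDeriv f i y) i x

/-- The Euler operator `𝔼f(x) = ∑_i x_i ∂_{x_i} f(x)`. -/
noncomputable def eulerOp {m : ℕ} (f : EuclideanSpace ℝ (Fin m) → ℂ)
    (x : EuclideanSpace ℝ (Fin m)) : ℂ :=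
  ∑ i, (x i : ℂ) * partialDeriv f i x

section Aux

variable {m : ℕ}

local notation "E" => EuclideanSpace ℝ (Fin m)

private lemma aux_hasFDerivAt_norm_rpow (c : ℝ) {x : E} (hx : x ≠ 0) :
    HasFDerivAt (fun y : E => ‖y‖ ^ c)
      ((c * ‖x‖ ^ (c - 2)) • (innerSL ℝ x : E →L[ℝ] ℝ)) x := by
  have hr : (0:ℝ) < ‖x‖ := norm_pos_iff.mpr hx
  have h1 : HasFDerivAt (fun y : E => ‖y‖ ^ 2)
      (2 • (innerSL ℝ x : E →L[ℝ] ℝ)) x := by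
    simpa using (hasFDerivAt_id x).norm_sq
  have h2 : HasDerivAt (fun t : ℝ => t ^ (c / 2)) ((c/2) * (‖x‖ ^ 2 : ℝ) ^ (c/2 - 1)) (‖x‖ ^ 2) :=
    Real.hasDerivAt_rpow_const (Or.inl (by positivity))
  have h3 := h2.comp_hasFDerivAt x h1
  have e1 : ((fun t : ℝ => t ^ (c / 2)) ∘ (fun y : E => ‖y‖ ^ 2))
      = fun y : E => ‖y‖ ^ c := by
    funext y
    simp only [Function.comp_apply]
    rw [← Real.rpow_natCast ‖y‖ 2, ← Real.rpow_mul (norm_nonneg y)]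
    push_cast
    rw [show (2:ℝ) * (c/2) = c by ring]
  have e2 : ((c/2) * (‖x‖ ^ 2 : ℝ) ^ (c/2 - 1)) • (2 • (innerSL ℝ x : E →L[ℝ] ℝ))
      = (c * ‖x‖ ^ (c - 2)) • (innerSL ℝ x : E →L[ℝ] ℝ) := by
    ext v
    simp only [ContinuousLinearMap.smul_apply, smul_eq_mul, nsmul_eq_mul, Nat.cast_ofNat]
    rw [← Real.rpow_natCast ‖x‖ 2, ← Real.rpow_mul (norm_nonneg x)]
    push_cast
    rw [show (2:ℝ) * (c/2 - 1) = c - 2 by ring]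
    ring
  rw [e1, e2] at h3
  exact h3

private lemma aux_hasFDerivAt_G (c : ℝ) {x : E} (hx : x ≠ 0) :
    HasFDerivAt (fun y : E => ((‖y‖ ^ c : ℝ) : ℂ))
      (Complex.ofRealCLM.comp ((c * ‖x‖ ^ (c - 2)) • (innerSL ℝ x : E →L[ℝ] ℝ))) x :=
  Complex.ofRealCLM.hasFDerivAt.comp x (aux_hasFDerivAt_norm_rpow c hx)

private lemma aux_diff_G (c : ℝ) {x : E} (hx : x ≠ 0) :
    DifferentiableAt ℝ (fun y : E => ((‖y‖ ^ c : ℝ) : ℂ)) x :=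
  (aux_hasFDerivAt_G c hx).differentiableAt

private lemma aux_pd_G (c : ℝ) {x : E} (hx : x ≠ 0) (i : Fin m) :
    partialDeriv (fun y : E => ((‖y‖ ^ c : ℝ) : ℂ)) i x
      = ((c * ‖x‖ ^ (c - 2) * x i : ℝ) : ℂ) := by
  rw [partialDeriv, (aux_hasFDerivAt_G c hx).fderiv]
  simp [innerSL_apply_apply, EuclideanSpace.inner_single_right]

private lemma aux_pd_coord (i : Fin m) (x : E) :
    partialDeriv (fun y : E => ((y i : ℝ) : ℂ)) i x = 1 := by
  have h : HasFDerivAt (fun y : E => ((y i : ℝ) : ℂ))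
      (Complex.ofRealCLM.comp (EuclideanSpace.proj i)) x :=
    (Complex.ofRealCLM.comp (EuclideanSpace.proj (𝕜 := ℝ) i)).hasFDerivAt
  rw [partialDeriv, h.fderiv]
  simp [EuclideanSpace.proj]

private lemma aux_diff_coord (i : Fin m) (x : E) :
    DifferentiableAt ℝ (fun y : E => ((y i : ℝ) : ℂ)) x :=
  (Complex.ofRealCLM.comp (EuclideanSpace.proj (𝕜 := ℝ) i)).differentiableAt

private lemma aux_pd_mul {u v : E → ℂ} {x : E}
    (hu : DifferentiableAt ℝ u x) (hv : DifferentiableAt ℝ v x) (i : Fin m) :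
    partialDeriv (fun y => u y * v y) i x
      = partialDeriv u i x * v x + u x * partialDeriv v i x := by
  unfold partialDeriv
  rw [fderiv_fun_mul hu hv]
  simp only [ContinuousLinearMap.add_apply, ContinuousLinearMap.smul_apply, smul_eq_mul]
  ring

private lemma aux_pd_add {u v : E → ℂ} {x : E}
    (hu : DifferentiableAt ℝ u x) (hv : DifferentiableAt ℝ v x) (i : Fin m) :
    partialDeriv (fun y => u y + v y) i x = partialDeriv u i x + partialDeriv v i x := by
  unfold partialDeriv
  rw [fderiv_fun_add hu hv]
  simp

private lemma aux_pd_const_mul {u : E → ℂ} {x : E} (c : ℂ)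
    (hu : DifferentiableAt ℝ u x) (i : Fin m) :
    partialDeriv (fun y => c * u y) i x = c * partialDeriv u i x := by
  unfold partialDeriv
  rw [fderiv_const_mul hu]
  simp

private lemma aux_contDiff_pd {f : E → ℂ} (hf : ContDiff ℝ (⊤ : ℕ∞) f) (i : Fin m) :
    ContDiff ℝ (⊤ : ℕ∞) (partialDeriv f i) := by
  have : ContDiff ℝ (⊤ : ℕ∞) (fderiv ℝ f) := hf.fderiv_right (by simp)
  exact this.clm_apply contDiff_const

end Aux

/-- The commutator `[|x|^{2-a}Δ, |x|^a] = 2a (𝔼 + (a+m-2)/2)`. -/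
theorem commutator_laplacian_power (m : ℕ) (hm : 1 ≤ m) (a : ℝ) (ha : 0 < a)
    (f : EuclideanSpace ℝ (Fin m) → ℂ) (hf : ContDiff ℝ (⊤ : ℕ∞) f)
    (x : EuclideanSpace ℝ (Fin m)) (hx : x ≠ 0) :
    ((‖x‖ ^ (2 - a) : ℝ) : ℂ) * laplacianOp (fun y => ((‖y‖ ^ a : ℝ) : ℂ) * f y) x -
      ((‖x‖ ^ a : ℝ) : ℂ) * (((‖x‖ ^ (2 - a) : ℝ) : ℂ) * laplacianOp f x) =
    2 * (a : ℂ) * (eulerOp f x + (((a + (m : ℝ) - 2) / 2 : ℝ) : ℂ) * f x) := by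
  have hr : (0:ℝ) < ‖x‖ := norm_pos_iff.mpr hx
  have hdf : ∀ y, DifferentiableAt ℝ f y := fun y => (hf.differentiable (by simp)).differentiableAt
  have hdpd : ∀ (i : Fin m) (y : EuclideanSpace ℝ (Fin m)),
      DifferentiableAt ℝ (partialDeriv f i) y :=
    fun i y => ((aux_contDiff_pd hf i).differentiable (by simp)).differentiableAt
  have step1 : ∀ (i : Fin m) (y : EuclideanSpace ℝ (Fin m)), y ≠ 0 →
      partialDeriv (fun z => ((‖z‖ ^ a : ℝ) : ℂ) * f z) i y
      = (a:ℂ) * (((‖y‖ ^ (a-2) : ℝ):ℂ) * (((y i : ℝ):ℂ) * f y))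
        + ((‖y‖ ^ a : ℝ):ℂ) * partialDeriv f i y := by
    intro i y hy
    rw [aux_pd_mul (aux_diff_G a hy) (hdf y) i, aux_pd_G a hy i]
    push_cast
    ring
  have key : ∀ i : Fin m,
      partialDeriv (fun y => partialDeriv (fun z => ((‖z‖ ^ a : ℝ) : ℂ) * f z) i y) i x
      = ((x i : ℝ):ℂ)^2 * ((a:ℂ) * ((a:ℂ) - 2) * ((‖x‖ ^ (a-4) : ℝ):ℂ) * f x)
        + (a:ℂ) * ((‖x‖ ^ (a-2) : ℝ):ℂ) * f x
        + 2 * (a:ℂ) * ((‖x‖ ^ (a-2) : ℝ):ℂ) * (((x i : ℝ):ℂ) * partialDeriv f i x)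
        + ((‖x‖ ^ a : ℝ):ℂ) * partialDeriv (fun y => partialDeriv f i y) i x := by
    intro i
    have hev : (fun y => partialDeriv (fun z => ((‖z‖ ^ a : ℝ) : ℂ) * f z) i y)
        =ᶠ[nhds x] (fun y => (a:ℂ) * (((‖y‖ ^ (a-2) : ℝ):ℂ) * (((y i : ℝ):ℂ) * f y))
          + ((‖y‖ ^ a : ℝ):ℂ) * partialDeriv f i y) := by
      filter_upwards [isOpen_compl_singleton.eventually_mem
        (show x ∈ ({0}ᶜ : Set (EuclideanSpace ℝ (Fin m))) from hx)] with y hy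
      exact step1 i y hy
    have hpd_eq : partialDeriv (fun y =>
          partialDeriv (fun z => ((‖z‖ ^ a : ℝ) : ℂ) * f z) i y) i x
        = partialDeriv (fun y => (a:ℂ) * (((‖y‖ ^ (a-2) : ℝ):ℂ) * (((y i : ℝ):ℂ) * f y))
          + ((‖y‖ ^ a : ℝ):ℂ) * partialDeriv f i y) i x :=
      congrArg (fun L : EuclideanSpace ℝ (Fin m) →L[ℝ] ℂ => L (EuclideanSpace.single i 1))
        hev.fderiv_eq
    rw [hpd_eq]
    have d1 : DifferentiableAt ℝ (fun y : EuclideanSpace ℝ (Fin m) =>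
        ((y i : ℝ):ℂ) * f y) x := (aux_diff_coord i x).mul (hdf x)
    have d2 : DifferentiableAt ℝ (fun y : EuclideanSpace ℝ (Fin m) =>
        ((‖y‖ ^ (a-2) : ℝ):ℂ) * (((y i : ℝ):ℂ) * f y)) x := (aux_diff_G (a-2) hx).mul d1
    have d4 : DifferentiableAt ℝ (fun y : EuclideanSpace ℝ (Fin m) =>
        ((‖y‖ ^ a : ℝ):ℂ) * partialDeriv f i y) x := (aux_diff_G a hx).mul (hdpd i x)
    rw [aux_pd_add (d2.const_mul _) d4 i, aux_pd_const_mul _ d2 i,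
      aux_pd_mul (aux_diff_G (a-2) hx) d1 i,
      aux_pd_mul (aux_diff_coord i x) (hdf x) i,
      aux_pd_mul (aux_diff_G a hx) (hdpd i x) i,
      aux_pd_G (a-2) hx i, aux_pd_G a hx i, aux_pd_coord i x,
      show a - 2 - 2 = a - 4 by ring]
    push_cast
    ring
  have hnormsq : (∑ i, ((x i : ℝ):ℂ)^2) = ((‖x‖^(2:ℕ) : ℝ) : ℂ) := by
    have h : ‖x‖^(2:ℕ) = ∑ i, (x i)^2 := by
      rw [EuclideanSpace.norm_eq, Real.sq_sqrt (by positivity)]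
      simp [Real.norm_eq_abs, sq_abs]
    rw [h]
    push_cast
    rfl
  have hlap : laplacianOp (fun z => ((‖z‖ ^ a : ℝ) : ℂ) * f z) x
      = ((‖x‖^(2:ℕ) : ℝ):ℂ) * ((a:ℂ) * ((a:ℂ) - 2) * ((‖x‖ ^ (a-4) : ℝ):ℂ) * f x)
        + (m:ℂ) * ((a:ℂ) * ((‖x‖ ^ (a-2) : ℝ):ℂ) * f x)
        + 2 * (a:ℂ) * ((‖x‖ ^ (a-2) : ℝ):ℂ) * eulerOp f x
        + ((‖x‖ ^ a : ℝ):ℂ) * laplacianOp f x := by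
    rw [laplacianOp, Finset.sum_congr rfl (fun i _ => key i),
      Finset.sum_add_distrib, Finset.sum_add_distrib, Finset.sum_add_distrib,
      ← Finset.sum_mul, hnormsq, eulerOp, laplacianOp, Finset.mul_sum, Finset.mul_sum]
    simp [Finset.sum_const, Finset.card_univ, Fintype.card_fin, nsmul_eq_mul]
  rw [hlap]
  have E1 : ((‖x‖ ^ (2-a) : ℝ):ℂ) * ((‖x‖ ^ (a-4) : ℝ):ℂ) * ((‖x‖^(2:ℕ) : ℝ):ℂ) = 1 := by
    rw [← Complex.ofReal_mul, ← Complex.ofReal_mul, ← Real.rpow_natCast ‖x‖ 2,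
      ← Real.rpow_add hr, ← Real.rpow_add hr]
    norm_num
  have E2 : ((‖x‖ ^ (2-a) : ℝ):ℂ) * ((‖x‖ ^ (a-2) : ℝ):ℂ) = 1 := by
    rw [← Complex.ofReal_mul, ← Real.rpow_add hr]
    norm_num
  push_cast at E1 E2 ⊢
  linear_combination ((a:ℂ) * ((a:ℂ) - 2) * f x) * E1
    + ((a:ℂ) * (m:ℂ) * f x + 2 * (a:ℂ) * eulerOp f x) * E2
end

section
/- Let m ≥ 1 be an integer, a > 0, and let f : ℝ^m → ℂ be a smooth function. Then for every x ∈ ℝ^m with x ≠ 0, |x|^{2-a} Δ(𝔼f + ((a+m-2)/2) f)(x) − (𝔼(|x|^{2-a} Δf)(x) + ((a+m-2)/2) |x|^{2-a} Δf(x)) = a |x|^{2-a} Δf(x), i.e. the commutator of the operators |x|^{2-a}Δ and 𝔼 + (a+m-2)/2 equals a |x|^{2-a}Δ. -/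
variable {m : ℕ} {f g h : EuclideanSpace ℝ (Fin m) → ℂ} {i j : Fin m}
  {x : EuclideanSpace ℝ (Fin m)}

lemma contDiff_pd (hf : ContDiff ℝ (⊤ : ℕ∞) f) (i : Fin m) : ContDiff ℝ (⊤ : ℕ∞) (partialDeriv f i) := by
  have h1 : ContDiff ℝ (⊤ : ℕ∞) (fderiv ℝ f) := hf.fderiv_right (by simp)
  exact (ContinuousLinearMap.apply ℝ ℂ (EuclideanSpace.single i 1)).contDiff.comp h1

lemma pd_add (hg : DifferentiableAt ℝ g x) (hh : DifferentiableAt ℝ h x) :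
    partialDeriv (fun y => g y + h y) i x = partialDeriv g i x + partialDeriv h i x := by
  unfold partialDeriv
  rw [fderiv_fun_add hg hh]; rfl

lemma pd_sum {s : Finset (Fin m)} {F : Fin m → EuclideanSpace ℝ (Fin m) → ℂ}
    (hF : ∀ k ∈ s, DifferentiableAt ℝ (F k) x) :
    partialDeriv (fun y => ∑ k ∈ s, F k y) i x = ∑ k ∈ s, partialDeriv (F k) i x := by
  unfold partialDeriv
  rw [fderiv_fun_sum hF]; simp

lemma pd_const_mul (hg : DifferentiableAt ℝ g x) (c : ℂ) :
    partialDeriv (fun y => c * g y) i x = c * partialDeriv g i x := by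
  unfold partialDeriv
  rw [fderiv_const_mul hg]; rfl

lemma pd_mul (hg : DifferentiableAt ℝ g x) (hh : DifferentiableAt ℝ h x) :
    partialDeriv (fun y => g y * h y) i x
      = partialDeriv g i x * h x + g x * partialDeriv h i x := by
  unfold partialDeriv
  rw [fderiv_fun_mul hg hh]
  simp only [ContinuousLinearMap.add_apply, ContinuousLinearMap.smul_apply, smul_eq_mul]
  ring

lemma pd_coord : partialDeriv (fun y => ((y j : ℝ) : ℂ)) i x = if j = i then 1 else 0 := by
  have : (fun y : EuclideanSpace ℝ (Fin m) => ((y j : ℝ) : ℂ))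
      = (Complex.ofRealCLM.comp (EuclideanSpace.proj j) : EuclideanSpace ℝ (Fin m) →L[ℝ] ℂ) := rfl
  unfold partialDeriv
  rw [this, ContinuousLinearMap.fderiv]
  simp [EuclideanSpace.single_apply]
  split <;> simp

lemma pd_pd_eq_sndFDeriv (hf : ContDiff ℝ (⊤ : ℕ∞) f) :
    partialDeriv (partialDeriv f i) j x
      = fderiv ℝ (fderiv ℝ f) x (EuclideanSpace.single j 1) (EuclideanSpace.single i 1) := by
  have h1 : ContDiff ℝ (⊤ : ℕ∞) (fderiv ℝ f) := hf.fderiv_right (by simp)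
  have h2 : DifferentiableAt ℝ (fderiv ℝ f) x := (h1.differentiable (by simp)).differentiableAt
  have : partialDeriv f i = fun y =>
      (ContinuousLinearMap.apply ℝ ℂ (EuclideanSpace.single i 1)) (fderiv ℝ f y) := rfl
  have key : fderiv ℝ (partialDeriv f i) x
      = (ContinuousLinearMap.apply ℝ ℂ (EuclideanSpace.single i 1)).comp
        (fderiv ℝ (fderiv ℝ f) x) := by
    rw [this]
    exact ((ContinuousLinearMap.apply ℝ ℂ
      (EuclideanSpace.single i 1)).hasFDerivAt.comp x h2.hasFDerivAt).fderiv
  show fderiv ℝ (partialDeriv f i) x (EuclideanSpace.single j 1) = _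
  rw [key]
  rfl

lemma pd_comm (hf : ContDiff ℝ (⊤ : ℕ∞) f) :
    partialDeriv (partialDeriv f i) j x = partialDeriv (partialDeriv f j) i x := by
  rw [pd_pd_eq_sndFDeriv hf, pd_pd_eq_sndFDeriv hf]
  exact (hf.contDiffAt.isSymmSndFDerivAt (by rw [minSmoothness_of_isRCLikeNormedField]; exact WithTop.coe_le_coe.mpr le_top)) _ _

lemma contDiff_coord (j : Fin m) :
    ContDiff ℝ (⊤ : ℕ∞) (fun y : EuclideanSpace ℝ (Fin m) => ((y j : ℝ) : ℂ)) :=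
  (Complex.ofRealCLM.comp (EuclideanSpace.proj j) :
    EuclideanSpace ℝ (Fin m) →L[ℝ] ℂ).contDiff

lemma contDiff_lap (hf : ContDiff ℝ (⊤ : ℕ∞) f) : ContDiff ℝ (⊤ : ℕ∞) (laplacianOp f) := by
  unfold laplacianOp
  exact ContDiff.sum fun i _ => contDiff_pd (contDiff_pd hf i) i

lemma contDiff_euler (hf : ContDiff ℝ (⊤ : ℕ∞) f) : ContDiff ℝ (⊤ : ℕ∞) (eulerOp f) := by
  unfold eulerOp
  exact ContDiff.sum fun i _ => (contDiff_coord i).mul (contDiff_pd hf i)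

lemma pd_euler (hf : ContDiff ℝ (⊤ : ℕ∞) f) :
    partialDeriv (eulerOp f) j x
      = partialDeriv f j x + ∑ i, (x i : ℂ) * partialDeriv (partialDeriv f i) j x := by
  have heq : eulerOp f = fun y => ∑ i, ((y i : ℝ) : ℂ) * partialDeriv f i y := rfl
  rw [heq, pd_sum (fun k _ => ((contDiff_coord k).differentiable (by simp)).differentiableAt.fun_mul
      (((contDiff_pd hf k).differentiable (by simp)).differentiableAt))]
  have : ∀ k, partialDeriv (fun y => ((y k : ℝ) : ℂ) * partialDeriv f k y) j x
      = (if k = j then 1 else 0) * partialDeriv f k x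
        + (x k : ℂ) * partialDeriv (partialDeriv f k) j x := by
    intro k
    rw [pd_mul ((contDiff_coord k).differentiable (by simp)).differentiableAt
        ((contDiff_pd hf k).differentiable (by simp)).differentiableAt, pd_coord]
  simp only [this, add_mul, Finset.sum_add_distrib]
  congr 1
  simp [Finset.sum_ite_eq']

lemma lap_euler (hf : ContDiff ℝ (⊤ : ℕ∞) f) :
    laplacianOp (eulerOp f) x = 2 * laplacianOp f x + eulerOp (laplacianOp f) x := by
  have hpd : ∀ (g : EuclideanSpace ℝ (Fin m) → ℂ), ContDiff ℝ (⊤ : ℕ∞) g →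
      ∀ k, DifferentiableAt ℝ (partialDeriv g k) x := fun g hg k =>
    ((contDiff_pd hg k).differentiable (by simp)).differentiableAt
  have step1 : ∀ j : Fin m, partialDeriv (eulerOp f) j
      = fun y => partialDeriv f j y + ∑ i, ((y i : ℝ) : ℂ)
          * partialDeriv (partialDeriv f i) j y := by
    intro j; funext y; exact pd_euler hf
  have step2 : ∀ j, partialDeriv (partialDeriv (eulerOp f) j) j x
      = 2 * partialDeriv (partialDeriv f j) j x
        + ∑ i, (x i : ℂ) * partialDeriv (partialDeriv (partialDeriv f j) j) i x := by
    intro j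
    rw [step1 j]
    have hdsum : DifferentiableAt ℝ (fun y : EuclideanSpace ℝ (Fin m) =>
        ∑ i, ((y i : ℝ) : ℂ) * partialDeriv (partialDeriv f i) j y) x :=
      DifferentiableAt.fun_sum fun k _ =>
        ((contDiff_coord k).differentiable (by simp)).differentiableAt.fun_mul
          (((contDiff_pd (contDiff_pd hf k) j).differentiable (by simp)).differentiableAt)
    rw [pd_add (((contDiff_pd hf j).differentiable (by simp)).differentiableAt) hdsum,
        pd_sum (fun k _ => ((contDiff_coord k).differentiable (by simp)).differentiableAt.fun_mul
          (((contDiff_pd (contDiff_pd hf k) j).differentiable (by simp)).differentiableAt))]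
    have hterm : ∀ k : Fin m,
        partialDeriv (fun y => ((y k : ℝ) : ℂ) * partialDeriv (partialDeriv f k) j y) j x
        = (if k = j then 1 else 0) * partialDeriv (partialDeriv f k) j x
          + (x k : ℂ) * partialDeriv (partialDeriv (partialDeriv f j) j) k x := by
      intro k
      rw [pd_mul ((contDiff_coord k).differentiable (by simp)).differentiableAt
          (((contDiff_pd (contDiff_pd hf k) j).differentiable (by simp)).differentiableAt),
        pd_coord]
      congr 2
      -- swap: ∂_j (∂_j ∂_k f) = ∂_k (∂_j ∂_j f)
      have e1 : partialDeriv (partialDeriv f k) j = partialDeriv (partialDeriv f j) k := by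
        funext y; exact pd_comm hf
      rw [e1]
      exact pd_comm (contDiff_pd hf j)
    simp only [hterm, Finset.sum_add_distrib]
    simp only [ite_mul, one_mul, zero_mul, Finset.sum_ite_eq', Finset.mem_univ, if_true]
    ring
  have lap_eq : laplacianOp (eulerOp f) x
      = ∑ j, partialDeriv (partialDeriv (eulerOp f) j) j x := rfl
  rw [lap_eq]
  simp only [step2, Finset.sum_add_distrib]
  congr 1
  · rw [← Finset.mul_sum]; rfl
  · rw [Finset.sum_comm]
    unfold eulerOp
    congr 1; funext i
    rw [← Finset.mul_sum]
    congr 1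
    have : laplacianOp f = fun y => ∑ j, partialDeriv (partialDeriv f j) j y := rfl
    rw [this, pd_sum (fun k _ => ((contDiff_pd (contDiff_pd hf k) k).differentiable
      (by simp)).differentiableAt)]

lemma normRpowHasFDerivAt (c : ℝ) (hx : x ≠ 0) :
    HasFDerivAt (fun y : EuclideanSpace ℝ (Fin m) => ‖y‖ ^ c)
      ((c * ‖x‖ ^ (c - 2)) • (innerSL ℝ x)) x := by
  have hxn : ‖x‖ ≠ 0 := norm_ne_zero_iff.mpr hx
  have hx2 : ‖x‖ ^ 2 ≠ 0 := pow_ne_zero _ hxn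
  have h1 := (hasStrictFDerivAt_norm_sq x).hasFDerivAt
  have h2 := Real.hasDerivAt_rpow_const (x := ‖x‖ ^ 2) (p := c / 2) (Or.inl hx2)
  have h3 := h2.comp_hasFDerivAt x h1
  have hfun : (fun y : EuclideanSpace ℝ (Fin m) => (‖y‖ ^ 2) ^ (c / 2))
      = fun y => ‖y‖ ^ c := by
    funext y
    rw [← Real.rpow_natCast ‖y‖ 2, ← Real.rpow_mul (norm_nonneg y)]
    congr 1
    ring
  have hclm : (c / 2 * (‖x‖ ^ 2) ^ (c / 2 - 1)) • (2 • (innerSL ℝ x))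
      = (c * ‖x‖ ^ (c - 2)) • (innerSL ℝ x) := by
    have hpow : (‖x‖ ^ 2) ^ (c / 2 - 1) = ‖x‖ ^ (c - 2) := by
      rw [← Real.rpow_natCast ‖x‖ 2, ← Real.rpow_mul (norm_nonneg x)]
      congr 1
      push_cast
      ring
    ext y
    simp only [ContinuousLinearMap.smul_apply, smul_eq_mul, nsmul_eq_mul, Nat.cast_ofNat,
      hpow]
    ring
  rw [hclm] at h3
  exact h3.congr_of_eventuallyEq
    (Filter.Eventually.of_forall fun y => (congrFun hfun y).symm)

lemma pd_norm_rpow (c : ℝ) (hx : x ≠ 0) :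
    partialDeriv (fun y : EuclideanSpace ℝ (Fin m) => ((‖y‖ ^ c : ℝ) : ℂ)) i x
      = ((c * ‖x‖ ^ (c - 2) * x i : ℝ) : ℂ) := by
  have h : HasFDerivAt (fun y : EuclideanSpace ℝ (Fin m) => ((‖y‖ ^ c : ℝ) : ℂ))
      (Complex.ofRealCLM.comp ((c * ‖x‖ ^ (c - 2)) • (innerSL ℝ x))) x :=
    Complex.ofRealCLM.hasFDerivAt.comp x (normRpowHasFDerivAt c hx)
  unfold partialDeriv
  rw [h.fderiv]
  simp only [ContinuousLinearMap.coe_comp', Function.comp_apply,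
    ContinuousLinearMap.smul_apply, innerSL_apply_apply]
  have : (inner ℝ x (EuclideanSpace.single i (1:ℝ)) : ℝ) = x i := by
    rw [EuclideanSpace.inner_single_right]
    simp
  rw [this]
  simp [mul_assoc]

lemma euler_rpow_mul (c : ℝ) (hx : x ≠ 0) (hg : ContDiff ℝ (⊤ : ℕ∞) g) :
    eulerOp (fun y => ((‖y‖ ^ c : ℝ) : ℂ) * g y) x
      = ((c * ‖x‖ ^ c : ℝ) : ℂ) * g x + ((‖x‖ ^ c : ℝ) : ℂ) * eulerOp g x := by
  have hr : DifferentiableAt ℝ (fun y : EuclideanSpace ℝ (Fin m) => ((‖y‖ ^ c : ℝ) : ℂ)) x :=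
    (Complex.ofRealCLM.hasFDerivAt.comp x (normRpowHasFDerivAt c hx)).differentiableAt
  have hgd : DifferentiableAt ℝ g x := (hg.differentiable (by simp)).differentiableAt
  unfold eulerOp
  have hterm : ∀ i : Fin m,
      (x i : ℂ) * partialDeriv (fun y => ((‖y‖ ^ c : ℝ) : ℂ) * g y) i x
      = ((c * ‖x‖ ^ (c - 2) * (x i * x i) : ℝ) : ℂ) * g x
        + ((‖x‖ ^ c : ℝ) : ℂ) * ((x i : ℂ) * partialDeriv g i x) := by
    intro i
    rw [pd_mul hr hgd, pd_norm_rpow c hx]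
    push_cast
    ring
  simp only [hterm, Finset.sum_add_distrib, ← Finset.sum_mul, ← Finset.mul_sum]
  congr 2
  norm_cast
  rw [← Finset.mul_sum]
  have hsum : ∑ i : Fin m, (x i * x i) = ‖x‖ ^ 2 := by
    rw [EuclideanSpace.norm_eq, Real.sq_sqrt (by positivity)]
    simp [sq_abs, sq]
  rw [hsum, mul_assoc, ← Real.rpow_natCast ‖x‖ 2,
    ← Real.rpow_add (norm_pos_iff.mpr hx)]
  norm_num

lemma lap_add_const_mul (hg : ContDiff ℝ (⊤ : ℕ∞) g) (hf : ContDiff ℝ (⊤ : ℕ∞) f) (c : ℂ) :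
    laplacianOp (fun y => g y + c * f y) x = laplacianOp g x + c * laplacianOp f x := by
  have hd : ∀ (h : EuclideanSpace ℝ (Fin m) → ℂ), ContDiff ℝ (⊤ : ℕ∞) h →
      ∀ y, DifferentiableAt ℝ h y := fun h hh y => (hh.differentiable (by simp)).differentiableAt
  have e1 : ∀ i : Fin m, partialDeriv (fun y => g y + c * f y) i
      = fun y => partialDeriv g i y + c * partialDeriv f i y := by
    intro i; funext y
    rw [pd_add (hd g hg y) ((hd f hf y).const_mul c), pd_const_mul (hd f hf y)]
  unfold laplacianOp
  rw [Finset.mul_sum, ← Finset.sum_add_distrib]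
  apply Finset.sum_congr rfl
  intro i _
  have e2 : (fun y => partialDeriv (fun z => g z + c * f z) i y)
      = fun y => partialDeriv g i y + c * partialDeriv f i y := by
    funext y; exact congrFun (e1 i) y
  rw [e2, pd_add (hd _ (contDiff_pd hg i) x) ((hd _ (contDiff_pd hf i) x).const_mul c),
    pd_const_mul (hd _ (contDiff_pd hf i) x)]

/-- The commutator `[|x|^{2-a}Δ, 𝔼 + (a+m-2)/2] = a |x|^{2-a}Δ`. -/
theorem commutator_laplacian_euler (m : ℕ) (hm : 1 ≤ m) (a : ℝ) (ha : 0 < a)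
    (f : EuclideanSpace ℝ (Fin m) → ℂ) (hf : ContDiff ℝ (⊤ : ℕ∞) f)
    (x : EuclideanSpace ℝ (Fin m)) (hx : x ≠ 0) :
    ((‖x‖ ^ (2 - a) : ℝ) : ℂ) *
        laplacianOp (fun y => eulerOp f y + (((a + (m : ℝ) - 2) / 2 : ℝ) : ℂ) * f y) x -
      (eulerOp (fun y => ((‖y‖ ^ (2 - a) : ℝ) : ℂ) * laplacianOp f y) x +
        (((a + (m : ℝ) - 2) / 2 : ℝ) : ℂ) * (((‖x‖ ^ (2 - a) : ℝ) : ℂ) * laplacianOp f x)) =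
    (a : ℂ) * (((‖x‖ ^ (2 - a) : ℝ) : ℂ) * laplacianOp f x) := by
  rw [lap_add_const_mul (contDiff_euler hf) hf, lap_euler hf,
    euler_rpow_mul (2 - a) hx (contDiff_lap hf)]
  push_cast
  ring
end

section
/- Let a > 0, let m ≥ 3 be an integer, λ = (m-2)/2, z > 0 and w ∈ [-1,1]. Then the family of complex numbers ( e^{-iπk/a} ((λ+k)/λ) z^{-λ} J_{2(k+λ)/a}((2/a) z^{a/2}) C_k^λ(w) )_{k∈ℕ} is (absolutely) summable; in particular the series defining the kernel K_a^m(z,w) of the radially deformed Fourier transform converges. -/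
/-!
Up to a phase of modulus one, the `k`-th term is `(λ + k)/λ · z^{-λ} · J_{ν_k}(x) · C_k^λ(w)` with
`ν_k = 2(k + λ)/a`. The power series of `J_ν` gives `|J_ν(x)| ≤ (x/2)^ν e^{(x/2)²} / Γ(ν + 1)`, and on
`[-1, 1]` the Gegenbauer polynomials grow at most geometrically, `|C_k^λ(w)| ≤ (8(1 + λ))^k`. Hence the
terms are dominated by `C R^k / Γ(2k/a + 2λ/a + 1)`, which is summable because `Γ(ck + d + 1)`
is at least `⌊k/M⌋! e^{-(ck + d + 1)}` for `M ≥ 1/c`, and this beats every geometric sequence.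
-/

open scoped Real

/-- Gegenbauer polynomial `C_k^λ(w)`. -/
noncomputable def gegenbauerC (lam : ℝ) (k : ℕ) (w : ℝ) : ℝ :=
  ∑ j ∈ Finset.range (k / 2 + 1),
    ((-1 : ℝ) ^ j * Real.Gamma ((k : ℝ) - (j : ℝ) + lam) /
      (Real.Gamma lam * (j.factorial : ℝ) * ((k - 2 * j).factorial : ℝ))) *
      (2 * w) ^ (k - 2 * j)

/-- The `k`-th term of the series defining the kernel of the radially deformed
Fourier transform, with `λ = (m-2)/2`. -/
noncomputable def kernelTerm (a lam z w : ℝ) (k : ℕ) : ℂ :=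
  Complex.exp (-(Real.pi * (k : ℝ) / a) * Complex.I) *
    (((lam + (k : ℝ)) / lam : ℝ) : ℂ) * ((z ^ (-lam) : ℝ) : ℂ) *
    ((besselJ (2 * ((k : ℝ) + lam) / a) ((2 / a) * z ^ (a / 2)) : ℝ) : ℂ) *
    ((gegenbauerC lam k w : ℝ) : ℂ)

/-- The kernel `K_a^m(z,w)` of the radially deformed Fourier transform (for `m ≥ 3`). -/
noncomputable def deformedKernel (a : ℝ) (m : ℕ) (z w : ℝ) : ℂ :=
  ((a ^ (((m : ℝ) - 2) / a) : ℝ) : ℂ) * ((Real.Gamma (((m : ℝ) - 2 + a) / a) : ℝ) : ℂ) *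
    ∑' k : ℕ, kernelTerm a (((m : ℝ) - 2) / 2) z w k

namespace Real

theorem Gamma_le_Gamma_add_nat {s : ℝ} (hs : 1 ≤ s) (n : ℕ) : Gamma s ≤ Gamma (s + n) := by
  induction n with
  | zero => simp
  | succ n ih =>
    have hpos : 0 < s + n := by positivity
    calc Gamma s ≤ Gamma (s + n) := ih
      _ ≤ (s + n) * Gamma (s + n) :=
          le_mul_of_one_le_left (Gamma_pos_of_pos hpos).le (by linarith [n.cast_nonneg (α := ℝ)])
      _ = Gamma (s + ↑(n + 1)) := by
          rw [Nat.cast_succ, ← add_assoc, Gamma_add_one hpos.ne']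

/-- `Γ(s + n) / Γ(s) = s (s + 1) ⋯ (s + n - 1)`, and `s + i ≤ (1 + s) (i + 1)`. -/
theorem Gamma_add_nat_le {s : ℝ} (hs : 0 < s) (n : ℕ) :
    Gamma (s + n) ≤ Gamma s * (1 + s) ^ n * n.factorial := by
  induction n with
  | zero => simp
  | succ n ih =>
    have hpos : 0 < s + n := by positivity
    rw [Nat.cast_succ, ← add_assoc, Gamma_add_one hpos.ne', Nat.factorial_succ, Nat.cast_mul,
      Nat.cast_succ, pow_succ]
    calc (s + n) * Gamma (s + n) ≤ ((1 + s) * (n + 1)) * (Gamma s * (1 + s) ^ n * n.factorial) := by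
          gcongr
          nlinarith [n.cast_nonneg (α := ℝ)]
      _ = _ := by ring

theorem inv_Gamma_add_one_le {ν : ℝ} {q : ℕ} (hq : (q : ℝ) ≤ ν) :
    (Gamma (ν + 1))⁻¹ ≤ exp (ν + 1) / q.factorial := by
  have hν : 0 ≤ ν := (q.cast_nonneg).trans hq
  have hΓ : 0 < Gamma (ν + 1) := Gamma_pos_of_pos (by linarith)
  have hfact : ((q + 1).factorial : ℝ) ≤ (ν + 1) * Gamma (ν + 1) := by
    rw [← Gamma_add_one (by linarith), ← Gamma_nat_eq_factorial, Nat.cast_succ]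
    exact Gamma_strictMonoOn_Ici.monotoneOn (by simp; linarith [q.cast_nonneg (α := ℝ)])
      (by simp; linarith) (by linarith)
  calc (Gamma (ν + 1))⁻¹ ≤ (ν + 1) / (q + 1).factorial := by
        rw [inv_eq_one_div, div_le_div_iff₀ hΓ (by positivity)]
        linarith
    _ ≤ exp (ν + 1) / q.factorial := by
        gcongr
        · linarith [add_one_le_exp (ν + 1)]
        · exact q.le_succ

end Real

open Real

/-- Writing `k = q M + r` with `r < M`, this is the product of the exponential series of `S ^ M`
and a finite sum. -/
theorem summable_pow_div_factorial_div (S : ℝ) (hS : 0 ≤ S) {M : ℕ} (hM : M ≠ 0) :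
    Summable fun k : ℕ => S ^ k / (k / M).factorial := by
  have : NeZero M := ⟨hM⟩
  have hprod : Summable fun p : ℕ × Fin M => (S ^ M) ^ p.1 / p.1.factorial * S ^ (p.2 : ℕ) :=
    Summable.mul_of_nonneg (f := fun i : ℕ => (S ^ M) ^ i / i.factorial)
      (g := fun r : Fin M => S ^ (r : ℕ)) (Real.summable_pow_div_factorial _) Summable.of_finite
      (fun _ => by positivity) (fun _ => by positivity)
  refine (Nat.divModEquiv M).symm.summable_iff.mp (hprod.congr fun p => ?_)
  have hdiv : (p.1 * M + (p.2 : ℕ)) / M = p.1 := by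
    rw [mul_comm, Nat.mul_add_div (Nat.pos_of_ne_zero hM), Nat.div_eq_of_lt p.2.isLt, add_zero]
  simp only [Function.comp_apply, Nat.divModEquiv_symm_apply, hdiv, pow_add, pow_mul]
  ring

theorem summable_pow_div_Gamma {c d R : ℝ} (hc : 0 < c) (hd : 0 ≤ d) (hR : 0 ≤ R) :
    Summable fun k : ℕ => R ^ k / Gamma (c * k + d + 1) := by
  set M := ⌈c⁻¹⌉₊
  have hM : M ≠ 0 := (Nat.ceil_pos.mpr (inv_pos.mpr hc)).ne'
  have hdiv_le (k : ℕ) : ((k / M : ℕ) : ℝ) ≤ c * k + d := by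
    have hcM : c⁻¹ ≤ M := Nat.le_ceil _
    calc ((k / M : ℕ) : ℝ) ≤ k / M := Nat.cast_div_le
      _ ≤ k / c⁻¹ := by gcongr
      _ ≤ c * k + d := by rw [div_inv_eq_mul]; linarith
  refine ((summable_pow_div_factorial_div (R * exp c) (by positivity) hM).mul_left
    (exp (d + 1))).of_nonneg_of_le (fun k => ?_) (fun k => ?_)
  · exact div_nonneg (pow_nonneg hR k) (Gamma_pos_of_pos (by positivity)).le
  · calc R ^ k / Gamma (c * k + d + 1) = R ^ k * (Gamma (c * k + d + 1))⁻¹ := div_eq_mul_inv _ _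
      _ ≤ R ^ k * (exp (c * k + d + 1) / (k / M).factorial) := by
          gcongr
          exact inv_Gamma_add_one_le (hdiv_le k)
      _ = exp (d + 1) * ((R * exp c) ^ k / (k / M).factorial) := by
          rw [show c * k + d + 1 = (d + 1) + k * c by ring, exp_add, exp_nat_mul]
          ring

theorem abs_besselJ_le {ν x : ℝ} (hν : 0 ≤ ν) (hx : 0 < x) :
    |besselJ ν x| ≤ (x / 2) ^ ν / Gamma (ν + 1) * exp ((x / 2) ^ 2) := by
  have ht : 0 < x / 2 := by positivity
  rw [exp_eq_exp_ℝ, besselJ, ← norm_eq_abs]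
  refine tsum_of_norm_bounded ((NormedSpace.expSeries_div_hasSum_exp ((x / 2) ^ 2)).mul_left
    ((x / 2) ^ ν / Gamma (ν + 1))) fun j => ?_
  have hΓj : Gamma (ν + 1) ≤ Gamma (j + ν + 1) := by
    rw [show (j : ℝ) + ν + 1 = ν + 1 + j by ring]
    exact Gamma_le_Gamma_add_nat (by linarith) j
  have hpow : (x / 2) ^ (2 * (j : ℝ) + ν) = ((x / 2) ^ 2) ^ j * (x / 2) ^ ν := by
    rw [rpow_add ht, ← rpow_natCast, ← rpow_natCast, ← rpow_mul ht.le]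
    norm_num
  rw [norm_mul, norm_div, norm_pow, norm_neg, norm_one, one_pow, hpow,
    norm_of_nonneg (mul_nonneg (Nat.cast_nonneg _) (Gamma_pos_of_pos (by positivity)).le),
    norm_of_nonneg (by positivity)]
  calc 1 / (j.factorial * Gamma (j + ν + 1)) * (((x / 2) ^ 2) ^ j * (x / 2) ^ ν)
      ≤ 1 / (j.factorial * Gamma (ν + 1)) * (((x / 2) ^ 2) ^ j * (x / 2) ^ ν) := by gcongr
    _ = _ := by ring

theorem Gamma_div_mul_factorial_le {lam : ℝ} (hlam : 0 < lam) {j k : ℕ} (hjk : 2 * j ≤ k) :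
    Gamma (k - j + lam) / (Gamma lam * j.factorial * (k - 2 * j).factorial) ≤ (2 * (1 + lam)) ^ k := by
  have hfact : ((k - j).factorial : ℝ) = (k - j).choose j * j.factorial * (k - 2 * j).factorial := by
    rw [show k - 2 * j = k - j - j by omega]
    exact_mod_cast (Nat.choose_mul_factorial_mul_factorial (by omega)).symm
  have hchoose : ((k - j).choose j : ℝ) ≤ 2 ^ k := by
    exact_mod_cast (Nat.choose_le_two_pow _ _).trans (Nat.pow_le_pow_right two_pos (by omega))
  rw [div_le_iff₀ (by positivity)]
  calc Gamma (k - j + lam) = Gamma (lam + (k - j : ℕ)) := by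
        rw [Nat.cast_sub (by omega), add_comm]
    _ ≤ Gamma lam * (1 + lam) ^ (k - j) * (k - j).factorial := Gamma_add_nat_le hlam _
    _ ≤ Gamma lam * (1 + lam) ^ k * (k - j).factorial := by
        gcongr
        · linarith
        · omega
    _ = (k - j).choose j * (Gamma lam * (1 + lam) ^ k * j.factorial * (k - 2 * j).factorial) := by
        rw [hfact]; ring
    _ ≤ 2 ^ k * (Gamma lam * (1 + lam) ^ k * j.factorial * (k - 2 * j).factorial) := by
        gcongr
    _ = (2 * (1 + lam)) ^ k * (Gamma lam * j.factorial * (k - 2 * j).factorial) := by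
        rw [mul_pow]; ring

theorem abs_gegenbauerC_le {lam w : ℝ} (hlam : 0 < lam) (hw : |w| ≤ 1) (k : ℕ) :
    |gegenbauerC lam k w| ≤ (8 * (1 + lam)) ^ k := by
  have hterm : ∀ j ∈ Finset.range (k / 2 + 1),
      |(-1) ^ j * Gamma (k - j + lam) / (Gamma lam * j.factorial * (k - 2 * j).factorial) *
        (2 * w) ^ (k - 2 * j)| ≤ (4 * (1 + lam)) ^ k := by
    intro j hj
    have hjk : 2 * j ≤ k := by have := Finset.mem_range.mp hj; omega
    have hΓ : 0 < Gamma (k - j + lam) :=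
      Gamma_pos_of_pos (by have : (j : ℝ) ≤ k := mod_cast (by omega : j ≤ k); linarith)
    have h2w : |2 * w| ^ (k - 2 * j) ≤ 2 ^ k :=
      calc |2 * w| ^ (k - 2 * j) ≤ 2 ^ (k - 2 * j) := by
            gcongr; rw [abs_mul, abs_two]; linarith
        _ ≤ 2 ^ k := pow_le_pow_right₀ one_le_two (by omega)
    rw [abs_mul, abs_div, abs_mul, abs_pow, abs_neg, abs_one, one_pow, one_mul, abs_of_pos hΓ,
      abs_of_pos (by positivity), abs_pow, show (4 * (1 + lam)) ^ k = (2 * (1 + lam)) ^ k * 2 ^ k by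
        rw [← mul_pow]; ring]
    exact mul_le_mul (Gamma_div_mul_factorial_le hlam hjk) h2w (by positivity) (by positivity)
  calc |gegenbauerC lam k w| ≤ ∑ j ∈ Finset.range (k / 2 + 1), (4 * (1 + lam)) ^ k :=
        (Finset.abs_sum_le_sum_abs _ _).trans (Finset.sum_le_sum hterm)
    _ = (k / 2 + 1 : ℕ) * (4 * (1 + lam)) ^ k := by rw [Finset.sum_const, Finset.card_range, nsmul_eq_mul]
    _ ≤ 2 ^ k * (4 * (1 + lam)) ^ k := by
        gcongr
        exact_mod_cast (by omega : k / 2 + 1 ≤ k + 1).trans Nat.lt_two_pow_self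
    _ = (8 * (1 + lam)) ^ k := by rw [← mul_pow]; ring

theorem norm_kernelTerm (a lam z w : ℝ) (k : ℕ) :
    ‖kernelTerm a lam z w k‖ = |(lam + k) / lam| * |z ^ (-lam)| *
      |besselJ (2 * (k + lam) / a) (2 / a * z ^ (a / 2))| * |gegenbauerC lam k w| := by
  have hphase : ‖Complex.exp (-(π * (k : ℝ) / a) * Complex.I)‖ = 1 := by
    exact_mod_cast Complex.norm_exp_ofReal_mul_I (-(π * k / a))
  simp only [kernelTerm, norm_mul, Complex.norm_real, norm_eq_abs, hphase, one_mul]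

theorem exists_norm_kernelTerm_le {a lam z w : ℝ} (ha : 0 < a) (hlam : 0 < lam) (hz : 0 < z)
    (hw : |w| ≤ 1) : ∃ C R : ℝ, 0 ≤ R ∧ ∀ k : ℕ,
      ‖kernelTerm a lam z w k‖ ≤ C * (R ^ k / Gamma (2 / a * k + 2 * lam / a + 1)) := by
  set t := 2 / a * z ^ (a / 2) / 2
  have ht : 0 < t := by positivity
  refine ⟨exp lam / lam * z ^ (-lam) * t ^ (2 * lam / a) * exp (t ^ 2),
    exp 1 * t ^ (2 / a) * (8 * (1 + lam)), by positivity, fun k => ?_⟩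
  have hν : 0 ≤ 2 * (k + lam) / a := by positivity
  have hlin : (lam + k) / lam ≤ exp lam / lam * exp 1 ^ k := by
    rw [← exp_nat_mul, mul_one, div_mul_eq_mul_div, ← exp_add]
    gcongr
    linarith [add_one_le_exp (lam + k)]
  have hsplit : t ^ (2 * (k + lam) / a) = t ^ (2 * lam / a) * (t ^ (2 / a)) ^ k := by
    rw [← rpow_natCast, ← rpow_mul ht.le, ← rpow_add ht]
    ring_nf
  calc ‖kernelTerm a lam z w k‖
      = (lam + k) / lam * z ^ (-lam) * |besselJ (2 * (k + lam) / a) (2 / a * z ^ (a / 2))| *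
          |gegenbauerC lam k w| := by
        rw [norm_kernelTerm, abs_of_nonneg (by positivity), abs_of_nonneg (by positivity)]
    _ ≤ exp lam / lam * exp 1 ^ k * z ^ (-lam) *
          (t ^ (2 * (k + lam) / a) / Gamma (2 * (k + lam) / a + 1) * exp (t ^ 2)) *
          (8 * (1 + lam)) ^ k := by
        gcongr
        · exact abs_besselJ_le hν (by positivity)
        · exact abs_gegenbauerC_le hlam hw k
    _ = _ := by
        rw [hsplit, show 2 * (k + lam) / a + 1 = 2 / a * k + 2 * lam / a + 1 by ring]
        simp only [mul_pow]
        ring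

/-- The series defining the kernel of the radially deformed Fourier transform
converges absolutely. -/
theorem kernel_series_summable (a : ℝ) (ha : 0 < a) (m : ℕ) (hm : 3 ≤ m)
    (z : ℝ) (hz : 0 < z) (w : ℝ) (hw : w ∈ Set.Icc (-1 : ℝ) 1) :
    Summable (fun k : ℕ => ‖kernelTerm a (((m : ℝ) - 2) / 2) z w k‖) ∧
    Summable (fun k : ℕ => kernelTerm a (((m : ℝ) - 2) / 2) z w k) := by
  have hlam : 0 < ((m : ℝ) - 2) / 2 := by
    have : (3 : ℝ) ≤ m := mod_cast hm
    linarith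
  obtain ⟨C, R, hR, hbound⟩ := exists_norm_kernelTerm_le ha hlam hz (abs_le.mpr hw)
  have hnorm : Summable fun k => ‖kernelTerm a (((m : ℝ) - 2) / 2) z w k‖ :=
    ((summable_pow_div_Gamma (by positivity) (by positivity) hR).mul_left C).of_nonneg_of_le
      (fun _ => norm_nonneg _) hbound
  exact ⟨hnorm, hnorm.of_norm⟩
end
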